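/- For every pair of groups A and G, the A-radical T_A G belongs to C_t(A), and for every group L belonging to C_t(A), composition with the inclusion T_A G ↪ G induces a bijection Hom(L, T_A G) → Hom(L, G). (In other words, the class C_t(A) is co-reflective with co-reflection given by the A-radical.) -/

import Mathlib

open CategoryTheory Limits

universe u v

/-- A class of groups closed under isomorphisms. -/
def IsoClosed (C : GrpCat.{u} → Prop) : Prop :=
  ∀ ⦃G H : GrpCat.{u}⦄, (G ≅ H) → C G → C H

/-- A class of groups is closed under direct limits if it contains the colimit
(computed in the category of groups) of every small diagram all of whose
objects belong to the class. -/
def ColimClosed (C : GrpCat.{u} → Prop) : Prop :=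
  ∀ (J : Type u) [SmallCategory J] (F : J ⥤ GrpCat.{u}) (c : Cocone F),
    IsColimit c → (∀ j, C (F.obj j)) → C c.pt

/-- A class of groups is closed under quotients if it contains the image of
every surjective homomorphism out of one of its members. -/
def QuotClosed (C : GrpCat.{u} → Prop) : Prop :=
  ∀ (G Q : GrpCat.{u}) (π : (G : Type u) →* Q),
    Function.Surjective π → C G → C Q

/-- A class of groups is closed under extensions if whenever
`1 → N → G → Q → 1` is a short exact sequence with `N` and `Q` in the class,
then `G` is in the class. -/
def ExtClosed (C : GrpCat.{u} → Prop) : Prop :=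
  ∀ (N G Q : GrpCat.{u}) (ι : (N : Type u) →* G) (π : (G : Type u) →* Q),
    Function.Injective ι → Function.Surjective π → ι.range = π.ker →
    C N → C Q → C G

/-- `C_t(A)`: the smallest class of groups containing `A` and closed under
isomorphisms, direct limits, quotients and extensions. -/
def radClass (A G : GrpCat.{u}) : Prop :=
  ∀ C : GrpCat.{u} → Prop, IsoClosed C → ColimClosed C → QuotClosed C → ExtClosed C → C A → C G

/-- The `A`-radical `T_A G` of `G`: the smallest normal subgroup `N` of `G`
such that every homomorphism from `A` to `G ⧸ N` is trivial. -/
def radical (A : Type u) [Group A] (G : Type v) [Group G] : Subgroup G :=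
  sInf {N : Subgroup G | ∃ _ : N.Normal, ∀ f : A →* G ⧸ N, f = 1}

/-!
The key fact is that every `L` in `C_t(A)` satisfies `T_A L = L`: the groups with this property
contain `A` and are closed under quotients, under direct limits (a colimit is generated by the
images of the cocone maps) and under extensions (for `1 → N → G → Q → 1` with `N`, `Q` in it,
`T_A G` contains `N`, so `G ⧸ T_A G` is a quotient of `Q` and thus its own `A`-radical, which
is however trivial).
As `T_A` is functorial, every homomorphism `L → G` then lands in `T_A G`.

For `T_A G ∈ C_t(A)`, let `M` be the join of all subgroups of `G` lying in `C_t(A)`. It lies in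
`C_t(A)` as a quotient of their free product and is characteristic. Every `f : A → G ⧸ M` is
trivial, since the preimage of its image is an extension of `M` by a quotient of `A`, hence one
of the joined subgroups. So `T_A G ≤ M`, and `M ≤ T_A G` by the key fact.
-/

theorem MonoidHom.eq_one_of_comp_eq_one {A G H : Type*} [Group A] [Group G] [Group H]
    {ψ : G →* H} (hψ : Function.Injective ψ) {f : A →* G} (h : ψ.comp f = 1) : f = 1 :=
  (MonoidHom.cancel_left hψ).1 (by rw [h, MonoidHom.comp_one])

section Radical

variable (A : Type*) [Group A] {G H : Type*} [Group G] [Group H]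

instance radical_normal : (radical A G).Normal where
  conj_mem n hn g := Subgroup.mem_sInf.2 fun N hN =>
    hN.1.conj_mem n (Subgroup.mem_sInf.1 hn N hN) g

theorem radical_le_of_forall_eq_one {N : Subgroup G} [N.Normal]
    (h : ∀ f : A →* G ⧸ N, f = 1) : radical A G ≤ N :=
  sInf_le ⟨inferInstance, h⟩

theorem eq_one_of_quotient_radical (f : A →* G ⧸ radical A G) : f = 1 := by
  ext a
  obtain ⟨x, hx⟩ := QuotientGroup.mk_surjective (f a)
  suffices x ∈ radical A G by simpa [← hx]
  refine Subgroup.mem_sInf.2 fun N ⟨_, hN⟩ => ?_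
  simpa [← hx] using DFunLike.congr_fun
    (hN ((QuotientGroup.map _ N (MonoidHom.id G) (radical_le_of_forall_eq_one A hN)).comp f)) a

theorem map_radical_le (f : G →* H) : (radical A G).map f ≤ radical A H := by
  rw [Subgroup.map_le_iff_le_comap]
  refine radical_le_of_forall_eq_one A fun φ => ?_
  let ψ : G ⧸ (radical A H).comap f →* H ⧸ radical A H := QuotientGroup.map _ _ f le_rfl
  have hψ : Function.Injective ψ := by
    rw [← MonoidHom.ker_eq_bot_iff, QuotientGroup.ker_map, Subgroup.map_eq_bot_iff,
      QuotientGroup.ker_mk']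
  exact MonoidHom.eq_one_of_comp_eq_one hψ (eq_one_of_quotient_radical A _)

theorem range_le_radical (f : A →* G) : f.range ≤ radical A G := by
  rw [← QuotientGroup.ker_mk' (radical A G), MonoidHom.range_le_ker_iff]
  exact eq_one_of_quotient_radical A _

theorem radical_self_eq_top : radical A A = ⊤ :=
  top_le_iff.1 <| (MonoidHom.range_eq_top_of_surjective _ Function.surjective_id).ge.trans
    (range_le_radical A (MonoidHom.id A))

theorem radical_eq_bot_of_forall_eq_one (h : ∀ f : A →* G, f = 1) : radical A G = ⊥ :=
  eq_bot_iff.2 <| radical_le_of_forall_eq_one A fun _ =>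
    MonoidHom.eq_one_of_comp_eq_one QuotientGroup.quotientBot.injective (h _)

theorem radical_quotient_radical : radical A (G ⧸ radical A G) = ⊥ :=
  radical_eq_bot_of_forall_eq_one A (eq_one_of_quotient_radical A)

end Radical

theorem GrpCat.iSup_range_eq_top_of_isColimit {J : Type u} [SmallCategory J]
    {F : J ⥤ GrpCat.{u}} {c : Cocone F} (hc : IsColimit c) :
    (⨆ j, (c.ι.app j).hom.range : Subgroup c.pt) = ⊤ := by
  set S : Subgroup c.pt := ⨆ j, (c.ι.app j).hom.range
  have mem_S (j : J) (x : F.obj j) : c.ι.app j x ∈ S := Subgroup.mem_iSup_of_mem j ⟨x, rfl⟩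
  let cS : Cocone F :=
    { pt := GrpCat.of S
      ι :=
        { app j := GrpCat.ofHom ((c.ι.app j).hom.codRestrict S (mem_S j))
          naturality j j' φ := by
            ext x
            exact Subtype.ext (ConcreteCategory.congr_hom (c.w φ) x) } }
  have hsplit : hc.desc cS ≫ GrpCat.ofHom S.subtype = 𝟙 c.pt :=
    hc.hom_ext fun j => by
      rw [hc.fac_assoc, Category.comp_id]
      rfl
  refine eq_top_iff.2 fun x _ => ?_
  rw [← ConcreteCategory.id_apply x, ← hsplit]
  exact ((hc.desc cS).hom x).2

def GrpCat.coprodICofanIsColimit {ι : Type u} (M : ι → Type u) [∀ i, Group (M i)] :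
    IsColimit (Cofan.mk (GrpCat.of (Monoid.CoprodI M))
      fun i => GrpCat.ofHom (Monoid.CoprodI.of (M := M) (i := i))) :=
  Cofan.IsColimit.mk _
    (fun t => GrpCat.ofHom (Monoid.CoprodI.lift (N := t.pt) fun i => (t.inj i).hom))
    (fun t i => by ext x; exact Monoid.CoprodI.lift_of (M := M) (fun i => (t.inj i).hom) x)
    (fun t m hm => GrpCat.hom_ext <| Monoid.CoprodI.ext_hom _ _ fun i => by
      ext x
      exact (ConcreteCategory.congr_hom (hm i) x).trans
        (Monoid.CoprodI.lift_of (M := M) (fun i => (t.inj i).hom) x).symm)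

section RadicalEqTop

variable {A G H : Type*} [Group A] [Group G] [Group H]

theorem radical_eq_top_of_surjective {f : G →* H} (hf : Function.Surjective f)
    (h : radical A G = ⊤) : radical A H = ⊤ := by
  rw [eq_top_iff, ← Subgroup.map_top_of_surjective f hf, ← h]
  exact map_radical_le A f

theorem radical_eq_top_of_extension {N Q : Type*} [Group N] [Group Q] (ι : N →* G) (π : G →* Q)
    (hπ : Function.Surjective π) (hιπ : ι.range = π.ker) (hN : radical A N = ⊤)
    (hQ : radical A Q = ⊤) : radical A G = ⊤ := by
  have hker : π.ker ≤ (QuotientGroup.mk' (radical A G)).ker := by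
    rw [← hιπ, QuotientGroup.ker_mk', MonoidHom.range_eq_map, ← hN]
    exact map_radical_le A ι
  let ψ : Q →* G ⧸ radical A G :=
    π.liftOfRightInverse _ (Function.rightInverse_surjInv hπ) ⟨_, hker⟩
  have hψ : Function.Surjective ψ := by
    refine Function.Surjective.of_comp (g := π) ?_
    rw [← MonoidHom.coe_comp, π.liftOfRightInverse_comp]
    exact QuotientGroup.mk'_surjective _
  have hbot := radical_quotient_radical A (G := G)
  rw [radical_eq_top_of_surjective hψ hQ] at hbot
  refine eq_top_iff.2 fun g _ => (QuotientGroup.eq_one_iff g).1 ?_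
  rw [← Subgroup.mem_bot, ← hbot]
  exact Subgroup.mem_top _

theorem radical_eq_top_of_isColimit {J : Type u} [SmallCategory J] {F : J ⥤ GrpCat.{u}}
    {c : Cocone F} (hc : IsColimit c) (h : ∀ j, radical A (F.obj j) = ⊤) :
    radical A c.pt = ⊤ := by
  rw [eq_top_iff, ← GrpCat.iSup_range_eq_top_of_isColimit hc]
  refine iSup_le fun j => ?_
  rw [MonoidHom.range_eq_map, ← h j]
  exact map_radical_le A _

end RadicalEqTop

section RadClass

variable {A : GrpCat.{u}}

theorem radical_eq_top_of_radClass {L : GrpCat.{u}} (hL : radClass A L) : radical A L = ⊤ :=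
  hL (fun L => radical A L = ⊤)
    (fun _ _ e => radical_eq_top_of_surjective e.groupIsoToMulEquiv.surjective)
    (fun _ _ _ _ hc => radical_eq_top_of_isColimit hc)
    (fun _ _ _ hπ => radical_eq_top_of_surjective hπ)
    (fun _ _ _ ι π _ hπ hιπ => radical_eq_top_of_extension ι π hπ hιπ)
    (radical_self_eq_top A)

theorem range_le_radical_of_radClass {L : GrpCat.{u}} (hL : radClass A L) {H : Type*} [Group H]
    (f : L →* H) : f.range ≤ radical A H := by
  rw [MonoidHom.range_eq_map, ← radical_eq_top_of_radClass hL]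
  exact map_radical_le A f

theorem radClass_self : radClass A A :=
  fun _ _ _ _ _ hA => hA

theorem radClass_of_surjective {L Q : GrpCat.{u}} {π : L →* Q} (hπ : Function.Surjective π)
    (hL : radClass A L) : radClass A Q :=
  fun C hI hCo hQ hE hA => hQ L Q π hπ (hL C hI hCo hQ hE hA)

theorem radClass_of_mulEquiv {L M : GrpCat.{u}} (e : L ≃* M) (hL : radClass A L) :
    radClass A M :=
  radClass_of_surjective (π := e.toMonoidHom) e.surjective hL

theorem radClass_coprodI {ι : Type u} {M : ι → Type u} [∀ i, Group (M i)]
    (h : ∀ i, radClass A (GrpCat.of (M i))) : radClass A (GrpCat.of (Monoid.CoprodI M)) :=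
  fun C hI hCo hQ hE hA => hCo (Discrete ι) _ _ (GrpCat.coprodICofanIsColimit M)
    fun i => h i.as C hI hCo hQ hE hA

theorem radClass_sSup {G : Type u} [Group G] {S : Set (Subgroup G)}
    (hS : ∀ K ∈ S, radClass A (GrpCat.of K)) : radClass A (GrpCat.of ↥(sSup S)) := by
  let ψ : Monoid.CoprodI (fun K : S => K.1) →* ↥(sSup S) :=
    Monoid.CoprodI.lift fun K => Subgroup.inclusion (le_sSup K.2)
  refine radClass_of_surjective (π := ψ) (fun y => ?_) (radClass_coprodI fun K => hS K.1 K.2)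
  have hψ : (sSup S).subtype.comp ψ = Monoid.CoprodI.lift fun K : S => K.1.subtype :=
    Monoid.CoprodI.ext_hom _ _ fun K => by ext; simp [ψ]
  have hy : (y : G) ∈ ((sSup S).subtype.comp ψ).range := by
    rw [hψ, Monoid.CoprodI.range_eq_iSup]
    simpa [sSup_eq_iSup'] using y.2
  obtain ⟨z, hz⟩ := hy
  exact ⟨z, Subtype.ext hz⟩

theorem radClass_of_le_of_map {G : Type u} [Group G] {M N : Subgroup G}
    [M.Normal] (hMN : M ≤ N) (hM : radClass A (GrpCat.of M))
    (hN : radClass A (GrpCat.of ↥(N.map (QuotientGroup.mk' M)))) : radClass A (GrpCat.of N) :=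
  fun C hI hCo hQ hE hA =>
    hE (GrpCat.of M) (GrpCat.of N) _ (Subgroup.inclusion hMN) ((QuotientGroup.mk' M).subgroupMap N)
      (Subgroup.inclusion_injective hMN) ((QuotientGroup.mk' M).subgroupMap_surjective N)
      (by rw [Subgroup.inclusion_range, Subgroup.ker_subgroupMap, QuotientGroup.ker_mk'])
      (hM C hI hCo hQ hE hA) (hN C hI hCo hQ hE hA)

end RadClass

section RadClassSup

variable (A : GrpCat.{u}) (G : Type u) [Group G]

def radClassSup : Subgroup G :=
  sSup {K | radClass A (GrpCat.of K)}

theorem radClass_radClassSup : radClass A (GrpCat.of (radClassSup A G)) :=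
  radClass_sSup fun _ hK => hK

variable {G} in
theorem le_radClassSup {K : Subgroup G} (hK : radClass A (GrpCat.of K)) : K ≤ radClassSup A G :=
  le_sSup hK

instance radClassSup_characteristic : (radClassSup A G).Characteristic :=
  Subgroup.characteristic_iff_map_le.2 fun φ => Subgroup.map_le_iff_le_comap.2 <|
    sSup_le fun K hK => Subgroup.map_le_iff_le_comap.1 <| le_radClassSup A <|
      radClass_of_mulEquiv (K.equivMapOfInjective _ φ.injective) hK

theorem eq_one_of_quotient_radClassSup (f : A →* G ⧸ radClassSup A G) : f = 1 := by
  have hf : f.range.comap (QuotientGroup.mk' _) ≤ radClassSup A G := by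
    refine le_radClassSup A (radClass_of_le_of_map ?_ (radClass_radClassSup A G) ?_)
    · exact (QuotientGroup.ker_mk' _).ge.trans (MonoidHom.ker_le_comap _ _)
    · rw [Subgroup.map_comap_eq_self_of_surjective (QuotientGroup.mk'_surjective _)]
      exact radClass_of_surjective f.rangeRestrict_surjective radClass_self
  rw [← MonoidHom.range_eq_bot_iff, eq_bot_iff,
    ← Subgroup.map_comap_eq_self_of_surjective (QuotientGroup.mk'_surjective _) f.range,
    Subgroup.map_le_iff_le_comap]
  simpa using hf

end RadClassSup

theorem radical_eq_radClassSup (A G : GrpCat.{u}) : radical A G = radClassSup A G :=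
  le_antisymm (radical_le_of_forall_eq_one A (eq_one_of_quotient_radClassSup A G)) <|
    sSup_le fun K hK => by simpa using range_le_radical_of_radClass hK K.subtype

/-- `C_t(A)` is co-reflective with co-reflection the `A`-radical: `T_A G`
belongs to `C_t(A)`, and for every `L` in `C_t(A)` composition with the
inclusion `T_A G ↪ G` is a bijection `Hom(L, T_A G) → Hom(L, G)`. -/
theorem stmt8 (A G : GrpCat.{u}) :
    radClass A (GrpCat.of (radical (A : Type u) (G : Type u))) ∧
      ∀ L : GrpCat.{u}, radClass A L →
        Function.Bijective
          (fun f : (L : Type u) →* radical (A : Type u) (G : Type u) =>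
            (radical (A : Type u) (G : Type u)).subtype.comp f) := by
  refine ⟨radical_eq_radClassSup A G ▸ radClass_radClassSup A G, fun L hL => ⟨?_, fun g => ?_⟩⟩
  · exact fun f₁ f₂ h => (MonoidHom.cancel_left Subtype.val_injective).1 h
  · exact ⟨g.codRestrict _ fun x => range_le_radical_of_radClass hL g ⟨x, rfl⟩, rfl⟩
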